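/- arXiv:2309.01885 — 3 statements merged into one kernel-verified Lean document; each statement's English description precedes it below -/
import Mathlib

section
/- Let X ∈ ℝ^{p×n}, W, Ŵ ∈ ℝ^{q×p}, Σ = X Xᵀ, and fix indices i ∈ [q], j ∈ [p] with Σ_{j,j} > 0. Consider the one-dimensional function u ↦ ‖W X − Ŵ(u) X‖_F² where Ŵ(u) agrees with Ŵ except entry (i,j) which equals u. Then this function is minimized over u ∈ ℝ at β̃ = −(∑_{k≠j} Σ_{j,k} Ŵ_{i,k} − (W Σ)_{i,j}) / Σ_{j,j}, and it is minimized over u ∈ Q_i (a finite grid) at q_i(β̃), where q_i is nearest-point quantization onto Q_i. -/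
/-!
Only row `i` of the residual `W X − Ŵ(u) X` depends on `u`, and it equals `b − u x` with
`x = X_{j,:}` and `b` the residual row for `u = 0`. So the objective is a constant plus `‖b − u x‖²`,
a one-variable least-squares problem whose normal equation `⟪b − β̃ x, x⟫ = 0`, i.e.
`Σ_{j,j} β̃ = (W Σ)_{i,j} − ∑_{k≠j} Σ_{j,k} Ŵ_{i,k}`, is the formula for `β̃`. Hence the objective
equals its value at `β̃` plus `Σ_{j,j} (u − β̃)²`, and any `u` closer to `β̃` gives a smaller value.
-/

open Matrix Finset

namespace Matrix

variable {m k n α : Type*} [DecidableEq m] [DecidableEq k]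

def updateEntry (M : Matrix m k α) (i : m) (j : k) (u : α) : Matrix m k α :=
  of fun r c => if r = i ∧ c = j then u else M r c

variable [Fintype k] [NonUnitalNonAssocSemiring α]

theorem updateEntry_mul_apply_of_ne (M : Matrix m k α) (X : Matrix k n α) {r i : m} (hr : r ≠ i)
    (j : k) (u : α) (c : n) : (M.updateEntry i j u * X) r c = (M * X) r c := by
  simp only [mul_apply, updateEntry, of_apply, hr, false_and, if_false]

theorem updateEntry_mul_apply_self (M : Matrix m k α) (X : Matrix k n α) (i : m) (j : k) (u : α)
    (c : n) : (M.updateEntry i j u * X) i c = u * X j c + ∑ l ∈ univ.erase j, M i l * X l c := by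
  rw [mul_apply, ← add_sum_erase _ _ (mem_univ j)]
  congr 1
  · simp [updateEntry]
  · refine sum_congr rfl fun l hl => ?_
    simp [updateEntry, ne_of_mem_erase hl]

end Matrix

theorem sum_sub_mul_sq_eq_of_orthogonal {ι : Type*} [Fintype ι] (b x : ι → ℝ) {β : ℝ}
    (h : ∑ c, (b c - β * x c) * x c = 0) (u : ℝ) :
    ∑ c, (b c - u * x c) ^ 2 = ∑ c, (b c - β * x c) ^ 2 + (∑ c, x c ^ 2) * (u - β) ^ 2 := by
  have expand : ∀ c, (b c - u * x c) ^ 2 = (b c - β * x c) ^ 2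
      - 2 * (u - β) * ((b c - β * x c) * x c) + (u - β) ^ 2 * x c ^ 2 := fun c => by ring
  simp only [expand, sum_add_distrib, sum_sub_distrib, ← mul_sum, h]
  ring

theorem le_of_sq_sub_le_of_eq_add_mul_sq {f : ℝ → ℝ} {β a : ℝ} (ha : 0 ≤ a)
    (hf : ∀ u, f u = f β + a * (u - β) ^ 2) {y u : ℝ} (h : (β - y) ^ 2 ≤ (β - u) ^ 2) :
    f y ≤ f u := by
  rw [hf y, hf u]
  have : a * (y - β) ^ 2 ≤ a * (u - β) ^ 2 := by
    rw [← neg_sub β y, ← neg_sub β u, neg_sq, neg_sq]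
    exact mul_le_mul_of_nonneg_left h ha
  linarith

section LayerwiseObjective

variable {m k n : Type*} [Fintype k] [Fintype n] [DecidableEq m] [DecidableEq k]

theorem sum_mul_updateEntry_zero_mul_transpose (W M : Matrix m k ℝ) (X : Matrix k n ℝ) (i : m)
    (j : k) :
    ∑ c, (W * X - M.updateEntry i j 0 * X) i c * X j c
      = (W * (X * Xᵀ)) i j - ∑ l ∈ univ.erase j, (X * Xᵀ) j l * M i l := by
  have hS : ∀ l, (X * Xᵀ) l j = (X * Xᵀ) j l := fun l => by
    rw [← transpose_apply (X * Xᵀ), transpose_mul, transpose_transpose]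
  calc ∑ c, (W * X - M.updateEntry i j 0 * X) i c * X j c
      = ((W * X - M.updateEntry i j 0 * X) * Xᵀ) i j := by simp [mul_apply]
    _ = (W * (X * Xᵀ)) i j - (M.updateEntry i j 0 * (X * Xᵀ)) i j := by
      rw [Matrix.sub_mul, Matrix.mul_assoc, Matrix.mul_assoc, Matrix.sub_apply]
    _ = (W * (X * Xᵀ)) i j - ∑ l ∈ univ.erase j, (X * Xᵀ) j l * M i l := by
      rw [updateEntry_mul_apply_self, zero_mul, zero_add]
      exact congrArg _ (sum_congr rfl fun l _ => by rw [hS, mul_comm])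

variable [Fintype m]

theorem sum_sq_sub_updateEntry_mul (W M : Matrix m k ℝ) (X : Matrix k n ℝ) (i : m) (j : k)
    (u : ℝ) :
    ∑ r, ∑ c, ((W * X - M.updateEntry i j u * X) r c) ^ 2
      = ∑ r ∈ univ.erase i, ∑ c, ((W * X - M * X) r c) ^ 2
        + ∑ c, ((W * X - M.updateEntry i j 0 * X) i c - u * X j c) ^ 2 := by
  rw [← add_sum_erase _ _ (mem_univ i), add_comm]
  congr 1
  · refine sum_congr rfl fun r hr => sum_congr rfl fun c _ => ?_
    rw [Matrix.sub_apply, Matrix.sub_apply, updateEntry_mul_apply_of_ne _ _ (ne_of_mem_erase hr)]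
  · refine sum_congr rfl fun c _ => ?_
    rw [Matrix.sub_apply, Matrix.sub_apply, updateEntry_mul_apply_self, updateEntry_mul_apply_self]
    ring

theorem sum_sq_sub_updateEntry_mul_eq_add_mul_sq (W M : Matrix m k ℝ) (X : Matrix k n ℝ)
    (i : m) (j : k) {β : ℝ}
    (hβ : (X * Xᵀ) j j * β = (W * (X * Xᵀ)) i j - ∑ l ∈ univ.erase j, (X * Xᵀ) j l * M i l)
    (u : ℝ) :
    ∑ r, ∑ c, ((W * X - M.updateEntry i j u * X) r c) ^ 2
      = ∑ r, ∑ c, ((W * X - M.updateEntry i j β * X) r c) ^ 2 + (X * Xᵀ) j j * (u - β) ^ 2 := by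
  have hSjj : (X * Xᵀ) j j = ∑ c, X j c ^ 2 := by simp [mul_apply, sq]
  have normal : ∑ c, ((W * X - M.updateEntry i j 0 * X) i c - β * X j c) * X j c = 0 := by
    simp only [sub_mul, sum_sub_distrib, sum_mul_updateEntry_zero_mul_transpose, mul_assoc,
      ← mul_sum, ← sq, ← hSjj]
    linarith
  rw [sum_sq_sub_updateEntry_mul, sum_sq_sub_updateEntry_mul,
    sum_sub_mul_sq_eq_of_orthogonal _ _ normal u, hSjj]
  ring

end LayerwiseObjective

theorem stmt_1_general (q p n : ℕ) (X : Matrix (Fin p) (Fin n) ℝ)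
    (W What : Matrix (Fin q) (Fin p) ℝ) (i : Fin q) (j : Fin p)
    (Qi : Finset ℝ) (qf : ℝ → ℝ)
    (hqf : ∀ x : ℝ, qf x ∈ Qi ∧ ∀ y ∈ Qi, (x - qf x) ^ 2 ≤ (x - y) ^ 2)
    (S : Matrix (Fin p) (Fin p) ℝ) (hS : S = X * Xᵀ) (hjj : 0 < S j j)
    (F : ℝ → ℝ)
    (hF : ∀ u : ℝ, F u = ∑ r, ∑ c,
      ((W * X - (Matrix.of fun r' c' => if r' = i ∧ c' = j then u else What r' c') * X) r c) ^ 2)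
    (βt : ℝ)
    (hβ : βt = -((∑ k ∈ Finset.univ.erase j, S j k * What i k) - (W * S) i j) / S j j) :
    (∀ u : ℝ, F βt ≤ F u) ∧ (qf βt ∈ Qi ∧ ∀ u ∈ Qi, F (qf βt) ≤ F u) := by
  subst hS
  have normal : (X * Xᵀ) j j * βt
      = (W * (X * Xᵀ)) i j - ∑ k ∈ univ.erase j, (X * Xᵀ) j k * What i k := by
    rw [hβ]
    field_simp
    ring
  have hquad : ∀ u, F u = F βt + (X * Xᵀ) j j * (u - βt) ^ 2 := fun u => by
    rw [hF, hF]
    exact sum_sq_sub_updateEntry_mul_eq_add_mul_sq W What X i j normal u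
  refine ⟨fun u => le_of_sq_sub_le_of_eq_add_mul_sq hjj.le hquad (by simpa using sq_nonneg _),
    (hqf βt).1, fun u hu => le_of_sq_sub_le_of_eq_add_mul_sq hjj.le hquad ((hqf βt).2 u hu)⟩

/-- The one-dimensional (in entry `(i,j)`) layerwise quantization objective
`u ↦ ‖W X − Ŵ(u) X‖_F²` is minimized over ℝ at `β̃` and over the grid `Q_i` at `q_i(β̃)`. -/
theorem stmt_1 (q p n : ℕ) (X : Matrix (Fin p) (Fin n) ℝ)
    (W What : Matrix (Fin q) (Fin p) ℝ) (i : Fin q) (j : Fin p)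
    (Qi : Finset ℝ) (hQi : Qi.Nonempty) (qf : ℝ → ℝ)
    (hqf : ∀ x : ℝ, qf x ∈ Qi ∧ ∀ y ∈ Qi, (x - qf x) ^ 2 ≤ (x - y) ^ 2)
    (S : Matrix (Fin p) (Fin p) ℝ) (hS : S = X * Xᵀ) (hjj : 0 < S j j)
    (F : ℝ → ℝ)
    (hF : ∀ u : ℝ, F u = ∑ r, ∑ c,
      ((W * X - (Matrix.of fun r' c' => if r' = i ∧ c' = j then u else What r' c') * X) r c) ^ 2)
    (βt : ℝ)
    (hβ : βt = -((∑ k ∈ Finset.univ.erase j, S j k * What i k) - (W * S) i j) / S j j) :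
    (∀ u : ℝ, F βt ≤ F u) ∧ (qf βt ∈ Qi ∧ ∀ u ∈ Qi, F (qf βt) ≤ F u) :=
  stmt_1_general q p n X W What i j Qi qf hqf S hS hjj F hF βt hβ
end

section
/- Fix Ŵ ∈ ℝ^{q×p}, W ∈ ℝ^{q×p}, X ∈ ℝ^{p×n}, and let g(H) = ‖W X − (Ŵ + H) X‖_F². Let L = 2λ_max(X Xᵀ) > 0, η = 1/L, and let P_s denote the hard-thresholding operator keeping the s largest-magnitude entries and zeroing the rest. If ‖H‖₀ ≤ s and H⁺ = P_s(H − η ∇g(H)), then g(H⁺) ≤ g(H). -/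
open Matrix Finset

/-! With `D = H⁺ - H` and the residual `A = W X - (Ŵ + H) X`, the objective is an exact quadratic
in `D`: `g(H⁺) = g(H) - 2⟨D, A Xᵀ⟩ + ‖D X‖²`, and `‖D X‖² ≤ λ ‖D‖²` because the eigenvalues of
`X Xᵀ` are at most `λ`. The gradient step is `H - η ∇g(H) = H + λ⁻¹ A Xᵀ`, and `H` itself is an
admissible `s`-sparse competitor of `H⁺`, so `‖D - λ⁻¹ A Xᵀ‖² ≤ ‖λ⁻¹ A Xᵀ‖²`, i.e.
`λ ‖D‖² ≤ 2⟨D, A Xᵀ⟩`. Adding the two estimates gives `g(H⁺) ≤ g(H)`. -/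

theorem Matrix.IsHermitian.dotProduct_mulVec_le {n : Type*} [Fintype n] [DecidableEq n]
    {S : Matrix n n ℝ} (hS : S.IsHermitian) {lam : ℝ} (hlam : ∀ k, hS.eigenvalues k ≤ lam)
    (v : n → ℝ) : v ⬝ᵥ (S *ᵥ v) ≤ lam * (v ⬝ᵥ v) := by
  have hpsd : (algebraMap ℝ (Matrix n n ℝ) lam - S).PosSemidef := by
    rw [posSemidef_iff_isHermitian_and_spectrum_nonneg, ← spectrum.singleton_sub_eq,
      hS.spectrum_real_eq_range_eigenvalues]
    refine ⟨(isHermitian_diagonal _).sub hS, ?_⟩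
    rintro _ ⟨_, rfl, _, ⟨k, rfl⟩, rfl⟩
    exact sub_nonneg.mpr (hlam k)
  have := hpsd.dotProduct_mulVec_nonneg v
  rw [Algebra.algebraMap_eq_smul_one, sub_mulVec, smul_mulVec, one_mulVec, dotProduct_sub,
    dotProduct_smul] at this
  simpa using this

section Residual

variable {l m n : Type*} [Fintype l] [Fintype m] [Fintype n] [DecidableEq m]
  (X : Matrix m n ℝ) (hS : (X * Xᵀ).IsHermitian) {lam : ℝ}

theorem dotProduct_self_sub_vecMul_le (hlam : ∀ k, hS.eigenvalues k ≤ lam)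
    (a : n → ℝ) (d : m → ℝ) :
    (a - d ᵥ* X) ⬝ᵥ (a - d ᵥ* X) ≤ a ⬝ᵥ a - 2 * (d ⬝ᵥ X *ᵥ a) + lam * (d ⬝ᵥ d) := by
  have hcross : (d ᵥ* X) ⬝ᵥ a = d ⬝ᵥ X *ᵥ a := (dotProduct_mulVec d X a).symm
  have hquad : (d ᵥ* X) ⬝ᵥ (d ᵥ* X) = d ⬝ᵥ (X * Xᵀ) *ᵥ d := by
    rw [← mulVec_mulVec, mulVec_transpose, dotProduct_mulVec]
  have := hS.dotProduct_mulVec_le hlam d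
  simp only [sub_dotProduct, dotProduct_sub, dotProduct_comm a (d ᵥ* X), hcross, hquad]
  linarith

theorem sum_sq_sub_mul_le (hlam : ∀ k, hS.eigenvalues k ≤ lam)
    (A : Matrix l n ℝ) (D : Matrix l m ℝ) :
    ∑ r, ∑ c, ((A - D * X) r c) ^ 2 ≤
      ∑ r, ∑ c, (A r c) ^ 2 - 2 * ∑ i, ∑ j, D i j * (A * Xᵀ) i j + lam * ∑ i, ∑ j, (D i j) ^ 2 := by
  calc ∑ r, ∑ c, ((A - D * X) r c) ^ 2 = ∑ r, (A r - D r ᵥ* X) ⬝ᵥ (A r - D r ᵥ* X) := by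
        simp [dotProduct, sq, mul_apply_eq_vecMul]
    _ ≤ ∑ r, (A r ⬝ᵥ A r - 2 * (D r ⬝ᵥ X *ᵥ A r) + lam * (D r ⬝ᵥ D r)) :=
        sum_le_sum fun r _ => dotProduct_self_sub_vecMul_le X hS hlam (A r) (D r)
    _ = _ := by
        simp [dotProduct, sq, sum_add_distrib, sum_sub_distrib, mul_sum, mul_apply_eq_vecMul,
          vecMul_transpose]

end Residual

theorem sum_sq_sub_le_of_sum_sq_le {ι κ : Type*} [Fintype ι] [Fintype κ]
    (P Q G : Matrix ι κ ℝ) (c : ℝ)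
    (h : ∑ i, ∑ j, (P i j - (Q i j + c * G i j)) ^ 2
      ≤ ∑ i, ∑ j, (Q i j - (Q i j + c * G i j)) ^ 2) :
    ∑ i, ∑ j, ((P - Q) i j) ^ 2 ≤ 2 * c * ∑ i, ∑ j, (P - Q) i j * G i j := by
  have hexp : ∑ i, ∑ j, (P i j - (Q i j + c * G i j)) ^ 2
      - ∑ i, ∑ j, (Q i j - (Q i j + c * G i j)) ^ 2
      = ∑ i, ∑ j, ((P - Q) i j) ^ 2 - 2 * c * ∑ i, ∑ j, (P - Q) i j * G i j := by
    simp only [mul_sum, ← sum_sub_distrib]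
    exact sum_congr rfl fun i _ => sum_congr rfl fun j _ => by rw [Matrix.sub_apply]; ring
  linarith

theorem stmt_6_general (q p n : ℕ) (X : Matrix (Fin p) (Fin n) ℝ)
    (W What : Matrix (Fin q) (Fin p) ℝ)
    (hSig : (X * Xᵀ).IsHermitian) (lam : ℝ)
    (hlam : lam = ⨆ k : Fin p, hSig.eigenvalues k) (hlampos : 0 < lam)
    (s : ℕ) (H Hplus Grad : Matrix (Fin q) (Fin p) ℝ)
    (hH : (Finset.univ.filter fun ij : Fin q × Fin p => H ij.1 ij.2 ≠ 0).card ≤ s)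
    (hGrad : Grad = (2 : ℝ) • ((What + H) * (X * Xᵀ)) - (2 : ℝ) • (W * (X * Xᵀ)))
    (hHplus_proj : ∀ K : Matrix (Fin q) (Fin p) ℝ,
      (Finset.univ.filter fun ij : Fin q × Fin p => K ij.1 ij.2 ≠ 0).card ≤ s →
      (∑ i, ∑ j, (Hplus i j - (H i j - (1 / (2 * lam)) * Grad i j)) ^ 2)
        ≤ ∑ i, ∑ j, (K i j - (H i j - (1 / (2 * lam)) * Grad i j)) ^ 2) :
    (∑ r, ∑ c, ((W * X - (What + Hplus) * X) r c) ^ 2)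
      ≤ ∑ r, ∑ c, ((W * X - (What + H) * X) r c) ^ 2 := by
  set A := W * X - (What + H) * X
  have hlam_ge : ∀ k, hSig.eigenvalues k ≤ lam :=
    fun k => hlam ▸ le_ciSup (Set.finite_range _).bddAbove k
  have hres : W * X - (What + Hplus) * X = A - (Hplus - H) * X := by
    simp only [A, Matrix.sub_mul, Matrix.add_mul]; abel
  have hstep : ∀ i j, H i j - 1 / (2 * lam) * Grad i j = H i j + lam⁻¹ * (A * Xᵀ) i j := by
    have hAX : A * Xᵀ = W * (X * Xᵀ) - (What + H) * (X * Xᵀ) := by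
      rw [Matrix.sub_mul, Matrix.mul_assoc, Matrix.mul_assoc]
    intro i j
    simp only [hGrad, hAX, Matrix.sub_apply, Matrix.smul_apply, smul_eq_mul]
    field_simp
    ring
  have hproj := sum_sq_sub_le_of_sum_sq_le Hplus H (A * Xᵀ) lam⁻¹
    (by simpa only [hstep] using hHplus_proj H hH)
  have hdesc : lam * ∑ i, ∑ j, ((Hplus - H) i j) ^ 2
      ≤ 2 * ∑ i, ∑ j, (Hplus - H) i j * (A * Xᵀ) i j := by
    calc _ ≤ lam * (2 * lam⁻¹ * ∑ i, ∑ j, (Hplus - H) i j * (A * Xᵀ) i j) :=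
          mul_le_mul_of_nonneg_left hproj hlampos.le
      _ = _ := by field_simp
  rw [hres]
  linarith [sum_sq_sub_mul_le X hSig hlam_ge A (Hplus - H)]

/-- IHT descent step: with `g(H) = ‖W X − (Ŵ+H) X‖_F²`, `L = 2λ_max(X Xᵀ) > 0`, `η = 1/L`,
and `H⁺ = P_s(H − η ∇g(H))`, if `‖H‖₀ ≤ s` then `g(H⁺) ≤ g(H)`. -/
theorem stmt_6 (q p n : ℕ) (X : Matrix (Fin p) (Fin n) ℝ)
    (W What : Matrix (Fin q) (Fin p) ℝ)
    (hSig : (X * Xᵀ).IsHermitian) (lam : ℝ)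
    (hlam : lam = ⨆ k : Fin p, hSig.eigenvalues k) (hlampos : 0 < lam)
    (s : ℕ) (H Hplus Grad : Matrix (Fin q) (Fin p) ℝ)
    (hH : (Finset.univ.filter fun ij : Fin q × Fin p => H ij.1 ij.2 ≠ 0).card ≤ s)
    (hGrad : Grad = (2 : ℝ) • ((What + H) * (X * Xᵀ)) - (2 : ℝ) • (W * (X * Xᵀ)))
    (hHplus_supp : (Finset.univ.filter fun ij : Fin q × Fin p => Hplus ij.1 ij.2 ≠ 0).card ≤ s)
    (hHplus_proj : ∀ K : Matrix (Fin q) (Fin p) ℝ,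
      (Finset.univ.filter fun ij : Fin q × Fin p => K ij.1 ij.2 ≠ 0).card ≤ s →
      (∑ i, ∑ j, (Hplus i j - (H i j - (1 / (2 * lam)) * Grad i j)) ^ 2)
        ≤ ∑ i, ∑ j, (K i j - (H i j - (1 / (2 * lam)) * Grad i j)) ^ 2) :
    (∑ r, ∑ c, ((W * X - (What + Hplus) * X) r c) ^ 2)
      ≤ ∑ r, ∑ c, ((W * X - (What + H) * X) r c) ^ 2 :=
  stmt_6_general q p n X W What hSig lam hlam hlampos s H Hplus Grad hH hGrad hHplus_proj
end

section
/- Let f(Ŵ) = ‖W X − Ŵ X‖_F² with X ∈ ℝ^{p×n}, W ∈ ℝ^{q×p}, and suppose Σ_{j,j} > 0 for all j where Σ = X Xᵀ. If W* is a CW-minimum of f over the grid ∏ Q_i, then for every (i,j), the entry W*_{i,j} equals q_i(β̃_{i,j}) for some optimal choice of the quantizer, where β̃_{i,j} = −(∑_{k≠j} Σ_{j,k} W*_{i,k} − (W Σ)_{i,j})/Σ_{j,j}; i.e., every CW-minimum is a fixed point of the QuantEase column update. -/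
open Matrix Finset

/-- Every coordinate-wise minimum of `f(Ŵ) = ‖W X − Ŵ X‖_F²` over the grids is a fixed point
of the QuantEase update: each entry `W*_{i,j}` is a nearest grid point to
`β̃_{i,j} = −(∑_{k≠j} Σ_{j,k} W*_{i,k} − (W Σ)_{i,j}) / Σ_{j,j}`. -/
theorem stmt_13 (q p n : ℕ) (X : Matrix (Fin p) (Fin n) ℝ) (W : Matrix (Fin q) (Fin p) ℝ)
    (Q : Fin q → Finset ℝ) (hQ : ∀ i, (Q i).Nonempty)
    (S : Matrix (Fin p) (Fin p) ℝ) (hS : S = X * Xᵀ) (hdiag : ∀ j, 0 < S j j)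
    (f : Matrix (Fin q) (Fin p) ℝ → ℝ)
    (hf : ∀ What, f What = ∑ r, ∑ c, ((W * X - What * X) r c) ^ 2)
    (Wstar : Matrix (Fin q) (Fin p) ℝ)
    (hfeas : ∀ i j, Wstar i j ∈ Q i)
    (hCW : ∀ (i : Fin q) (j : Fin p), ∀ u ∈ Q i,
      f Wstar ≤ f (Matrix.of fun r c => if r = i ∧ c = j then u else Wstar r c))
    (βt : Fin q → Fin p → ℝ)
    (hβ : ∀ i j, βt i j
      = -((∑ k ∈ Finset.univ.erase j, S j k * Wstar i k) - (W * S) i j) / S j j) :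
    ∀ (i : Fin q) (j : Fin p), ∀ y ∈ Q i,
      (βt i j - Wstar i j) ^ 2 ≤ (βt i j - y) ^ 2 := by
  intro i j y hy
  have h := hCW i j y hy
  rw [hf, hf] at h
  set A : Matrix (Fin q) (Fin n) ℝ := W * X - Wstar * X with hA
  set t : ℝ := y - Wstar i j with ht
  -- key rewriting of the perturbed residual
  have key : ∀ r c, (W * X - (Matrix.of fun r c => if r = i ∧ c = j then y else Wstar r c) * X) r c
      = A r c - (if r = i then t * X j c else 0) := by
    intro r c
    by_cases hr : r = i
    · subst hr
      have hsum : ∀ k : Fin p, (if k = j then y else Wstar r k) * X k c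
          = Wstar r k * X k c + (if k = j then t * X j c else 0) := by
        intro k
        by_cases hk : k = j
        · subst hk; simp [ht]; ring
        · simp [hk]
      simp only [Matrix.sub_apply, Matrix.mul_apply, Matrix.of_apply, hA,
        eq_self_iff_true, true_and]
      rw [Finset.sum_congr rfl (fun k _ => hsum k), Finset.sum_add_distrib,
        Finset.sum_ite_eq' Finset.univ j (fun _ => t * X j c)]
      simp only [Finset.mem_univ, if_pos]
      ring
    · simp only [Matrix.sub_apply, Matrix.mul_apply, Matrix.of_apply, hA]
      have : ∀ k : Fin p, (if r = i ∧ k = j then y else Wstar r k) * X k c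
          = Wstar r k * X k c := by intro k; simp [hr]
      rw [Finset.sum_congr rfl (fun k _ => this k)]
      simp [hr]
  have expand : ∀ r c, (A r c - (if r = i then t * X j c else 0)) ^ 2
      = (A r c) ^ 2 + (if r = i then t ^ 2 * X j c ^ 2 - 2 * t * A i c * X j c else 0) := by
    intro r c
    by_cases hr : r = i
    · subst hr; simp; ring
    · simp [hr]
  have h2 : (0:ℝ) ≤ ∑ c, (t ^ 2 * X j c ^ 2 - 2 * t * A i c * X j c) := by
    have hrw : ∑ r, ∑ c, ((W * X - (Matrix.of fun r c => if r = i ∧ c = j then y else Wstar r c) * X) r c) ^ 2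
        = (∑ r, ∑ c, (A r c) ^ 2)
          + ∑ c, (t ^ 2 * X j c ^ 2 - 2 * t * A i c * X j c) := by
      calc ∑ r, ∑ c, ((W * X - (Matrix.of fun r c => if r = i ∧ c = j then y else Wstar r c) * X) r c) ^ 2
          = ∑ r, ∑ c, ((A r c) ^ 2 + (if r = i then t ^ 2 * X j c ^ 2 - 2 * t * A i c * X j c else 0)) := by
            refine Finset.sum_congr rfl fun r _ => Finset.sum_congr rfl fun c _ => ?_
            rw [key r c, expand r c]
        _ = (∑ r, ∑ c, (A r c) ^ 2)
            + ∑ r, (if r = i then ∑ c, (t ^ 2 * X j c ^ 2 - 2 * t * A i c * X j c) else 0) := by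
            rw [← Finset.sum_add_distrib]
            refine Finset.sum_congr rfl fun r _ => ?_
            by_cases hr : r = i <;> simp [hr, Finset.sum_add_distrib]
        _ = _ := by rw [Finset.sum_ite_eq' Finset.univ i]; simp
    rw [hrw] at h
    linarith
  -- identify the linear coefficient with β̃
  have hne : S j j ≠ 0 := ne_of_gt (hdiag j)
  have hSjj : S j j = ∑ c, X j c ^ 2 := by
    simp [hS, Matrix.mul_apply, Matrix.transpose_apply, sq]
  have hWS : (W * S) i j = ∑ c, (W * X) i c * X j c := by
    rw [hS, ← Matrix.mul_assoc]
    simp [Matrix.mul_apply, Matrix.transpose_apply]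
  have hfull : ∑ k, S j k * Wstar i k = ∑ c, (Wstar * X) i c * X j c := by
    simp only [hS, Matrix.mul_apply, Matrix.transpose_apply, Finset.sum_mul]
    rw [Finset.sum_comm]
    refine Finset.sum_congr rfl fun c _ => Finset.sum_congr rfl fun k _ => ?_
    ring
  have herase : ∑ k ∈ Finset.univ.erase j, S j k * Wstar i k
      = (∑ c, (Wstar * X) i c * X j c) - S j j * Wstar i j := by
    rw [← hfull, eq_sub_iff_add_eq]
    exact Finset.sum_erase_add _ _ (Finset.mem_univ j)
  have hs : ∑ c, A i c * X j c
      = (∑ c, (W * X) i c * X j c) - ∑ c, (Wstar * X) i c * X j c := by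
    rw [← Finset.sum_sub_distrib]
    refine Finset.sum_congr rfl fun c _ => ?_
    simp [hA, Matrix.sub_apply]; ring
  have hβ' : βt i j * S j j
      = (W * S) i j - ∑ k ∈ Finset.univ.erase j, S j k * Wstar i k := by
    rw [hβ i j, div_mul_cancel₀ _ hne]; ring
  have hB : S j j * (βt i j - Wstar i j) = ∑ c, A i c * X j c := by
    have e1 : S j j * (βt i j - Wstar i j) = βt i j * S j j - S j j * Wstar i j := by ring
    rw [e1]
    linarith [hβ', herase, hWS, hs]
  -- turn h2 into the scalar quadratic inequality
  have h3 : (0:ℝ) ≤ t ^ 2 * S j j - 2 * t * ∑ c, A i c * X j c := by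
    have e : ∑ c, (t ^ 2 * X j c ^ 2 - 2 * t * A i c * X j c)
        = t ^ 2 * (∑ c, X j c ^ 2) - 2 * t * ∑ c, A i c * X j c := by
      rw [Finset.sum_sub_distrib, Finset.mul_sum, Finset.mul_sum]
      congr 1
      exact Finset.sum_congr rfl fun c _ => by ring
    rw [e, ← hSjj] at h2
    exact h2
  have h5 : S j j * (t ^ 2 - 2 * t * (βt i j - Wstar i j))
      = t ^ 2 * S j j - 2 * t * ∑ c, A i c * X j c := by
    rw [← hB]; ring
  have hd := hdiag j
  have h6 : 0 ≤ t ^ 2 - 2 * t * (βt i j - Wstar i j) := by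
    by_contra hneg
    push_neg at hneg
    nlinarith [h3, h5, mul_pos hd (neg_pos.mpr hneg)]
  have e2 : (βt i j - y) ^ 2 - (βt i j - Wstar i j) ^ 2
      = t ^ 2 - 2 * t * (βt i j - Wstar i j) := by
    rw [ht]; ring
  linarith
end
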